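/- Let f be a transcendental entire function and let c > 1. Then M(r,f)^c ≤ M(r^c, f) for all sufficiently large r. -/

import Mathlib

open Filter MeasureTheory Topology

/-- The maximum modulus `M(r, f) = max {|f z| : |z| = r}`. -/
noncomputable def maxMod (f : ℂ → ℂ) (r : ℝ) : ℝ :=
  sSup ((fun z => ‖f z‖) '' Metric.sphere (0 : ℂ) r)

/-- The minimum modulus `L(r, f) = min {|f z| : |z| = r}`. -/
noncomputable def minMod (f : ℂ → ℂ) (r : ℝ) : ℝ :=
  sInf ((fun z => ‖f z‖) '' Metric.sphere (0 : ℂ) r)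

/-- A transcendental entire function: entire and not a polynomial. -/
def TranscendentalEntire (f : ℂ → ℂ) : Prop :=
  Differentiable ℂ f ∧ ¬ ∃ p : Polynomial ℂ, ∀ z, f z = p.eval z

/-!
Write `φ t = log M(eᵗ, f)`. By Hadamard's three circles theorem `φ` is convex, and since `f` is
not a polynomial, Cauchy's estimates make `M(r, f)` outgrow every power of `r`; so for a fixed
`a > 0` eventually `φ t / t ≥ φ a / a`. Then the slope of `φ` on `[t, c t]` is at least its
slope on `[a, t]`, which is at least `φ t / t`, and this is `c φ t ≤ φ (c t)`.
-/

open Complex Metric Polynomial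

lemma norm_le_maxMod {f : ℂ → ℂ} (hf : Continuous f) {r : ℝ} {z : ℂ} (hz : z ∈ sphere 0 r) :
    ‖f z‖ ≤ maxMod f r :=
  le_csSup ((isCompact_sphere 0 r).image hf.norm).bddAbove (Set.mem_image_of_mem _ hz)

lemma maxMod_le {f : ℂ → ℂ} {r B : ℝ} (hr : 0 ≤ r) (h : ∀ z ∈ sphere (0 : ℂ) r, ‖f z‖ ≤ B) :
    maxMod f r ≤ B :=
  csSup_le ((NormedSpace.sphere_nonempty.2 hr).image _) (Set.forall_mem_image.2 h)

lemma norm_iteratedDeriv_mul_pow_le_maxMod {f : ℂ → ℂ} (hf : Differentiable ℂ f) (n : ℕ)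
    {R : ℝ} (hR : 0 < R) : ‖iteratedDeriv n f 0‖ * R ^ n ≤ n.factorial * maxMod f R := by
  have := norm_iteratedDeriv_le_of_forall_mem_sphere_norm_le n hR hf.diffContOnCl
    fun z hz => norm_le_maxMod hf.continuous hz
  rwa [le_div_iff₀ (by positivity)] at this

lemma Differentiable.exists_eq_eval_of_iteratedDeriv_eq_zero {f : ℂ → ℂ} (hf : Differentiable ℂ f)
    {N : ℕ} (h : ∀ n, N ≤ n → iteratedDeriv n f 0 = 0) : ∃ p : ℂ[X], ∀ z, f z = p.eval z := by
  refine ⟨∑ n ∈ Finset.range N, C ((n.factorial : ℂ)⁻¹ * iteratedDeriv n f 0) * X ^ n,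
    fun z => ?_⟩
  have hsum := hasSum_taylorSeries_of_entire hf 0 z
  rw [hsum.unique (hasSum_sum_of_ne_finset_zero (s := Finset.range N) fun n hn => ?_)]
  · simp [eval_finsetSum, mul_comm, mul_left_comm]
  · simp [h n (by simpa using hn)]

lemma TranscendentalEntire.exists_iteratedDeriv_ne_zero {f : ℂ → ℂ} (hf : TranscendentalEntire f)
    (N : ℕ) : ∃ n, N ≤ n ∧ iteratedDeriv n f 0 ≠ 0 := by
  by_contra! h
  exact hf.2 (hf.1.exists_eq_eval_of_iteratedDeriv_eq_zero h)

lemma TranscendentalEntire.eventually_rpow_le_maxMod {f : ℂ → ℂ} (hf : TranscendentalEntire f)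
    (K : ℝ) : ∀ᶠ r : ℝ in atTop, r ^ K ≤ maxMod f r := by
  obtain ⟨n, hKn, hn⟩ := hf.exists_iteratedDeriv_ne_zero (⌈K⌉₊ + 1)
  set a := ‖iteratedDeriv n f 0‖ / n.factorial
  have ha : 0 < a := by positivity
  have hK : K < n := (Nat.le_ceil K).trans_lt (by exact_mod_cast hKn)
  have hsmall : Tendsto (fun r : ℝ => r ^ (K - n)) atTop (𝓝 0) := by
    simpa using tendsto_rpow_neg_atTop (sub_pos.2 hK)
  filter_upwards [hsmall.eventually (gt_mem_nhds ha), eventually_gt_atTop 0] with r hr hr0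
  calc r ^ K = r ^ (K - n) * r ^ n := by
        rw [← Real.rpow_natCast, ← Real.rpow_add hr0, sub_add_cancel]
    _ ≤ a * r ^ n := by gcongr
    _ ≤ maxMod f r := by
        rw [div_mul_eq_mul_div, div_le_iff₀ (by positivity), mul_comm (maxMod f r)]
        exact norm_iteratedDeriv_mul_pow_le_maxMod hf.1 n hr0

open HadamardThreeLines in
/-- The three lines theorem applied to `f ∘ exp`. -/
lemma maxMod_le_three_circles {f : ℂ → ℂ} (hf : Differentiable ℂ f) {s r R : ℝ} (hs : 0 < s)
    (hsr : s ≤ r) (hrR : r ≤ R) (hsR : s < R) :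
    maxMod f r ≤ maxMod f s ^ (1 - (Real.log r - Real.log s) / (Real.log R - Real.log s)) *
      maxMod f R ^ ((Real.log r - Real.log s) / (Real.log R - Real.log s)) := by
  have hr : 0 < r := hs.trans_le hsr
  have hR : 0 < R := hr.trans_le hrR
  have norm_exp_eq {w : ℂ} {t : ℝ} (ht : 0 < t) (hw : w.re = Real.log t) : ‖exp w‖ = t := by
    rw [norm_exp, hw, Real.exp_log ht]
  have hbdd : BddAbove ((norm ∘ (f ∘ exp)) '' verticalClosedStrip (Real.log s) (Real.log R)) := by
    refine ((isCompact_closedBall (0 : ℂ) R).image hf.continuous.norm).bddAbove.mono ?_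
    rintro _ ⟨w, hw, rfl⟩
    refine ⟨exp w, ?_, rfl⟩
    rw [mem_closedBall_zero_iff, norm_exp, ← Real.exp_log hR]
    exact Real.exp_le_exp.2 hw.2
  refine maxMod_le hr.le fun z hz => ?_
  have hz0 : z ≠ 0 := ne_zero_of_mem_sphere hr.ne' ⟨z, hz⟩
  have hlog : (log z).re = Real.log r := by rw [log_re, mem_sphere_zero_iff_norm.1 hz]
  rw [← exp_log hz0, ← hlog]
  refine norm_le_interp_of_mem_verticalClosedStrip' (f := f ∘ exp)
    (Real.log_lt_log hs hsR) ?_ (hf.comp differentiable_exp).diffContOnCl hbdd ?_ ?_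
  · rw [verticalClosedStrip, Set.mem_preimage, hlog]
    exact ⟨Real.log_le_log hs hsr, Real.log_le_log hr hrR⟩
  · exact fun w hw => norm_le_maxMod hf.continuous (mem_sphere_zero_iff_norm.2 (norm_exp_eq hs hw))
  · exact fun w hw => norm_le_maxMod hf.continuous (mem_sphere_zero_iff_norm.2 (norm_exp_eq hR hw))

/-- `A`, `B`, `C` stand for the values of `t ↦ log M(eᵗ)` at `a`, `x`, `c * x`. -/
lemma mul_le_of_le_chord_of_mul_le_mul {a x c A B C : ℝ} (ha : 0 < a) (hax : a < x) (hc : 1 ≤ c)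
    (hchord : B ≤ (1 - (x - a) / (c * x - a)) * A + (x - a) / (c * x - a) * C)
    (hslope : x * A ≤ a * B) : c * B ≤ C := by
  have hD : 0 < c * x - a := by nlinarith
  have hchord' : (c * x - a) * B ≤ (c - 1) * x * A + (x - a) * C := by
    have hmul : (c * x - a) * ((1 - (x - a) / (c * x - a)) * A + (x - a) / (c * x - a) * C)
        = (c - 1) * x * A + (x - a) * C := by
      field_simp
      ring
    exact hmul ▸ mul_le_mul_of_nonneg_left hchord hD.le
  have : (x - a) * (c * B) ≤ (x - a) * C := by nlinarith
  exact le_of_mul_le_mul_left this (sub_pos.2 hax)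

lemma maxMod_pow_le_maxMod_rpow_of_rpow_le_maxMod {f : ℂ → ℂ} (hf : Differentiable ℂ f) {s r c : ℝ}
    (hs : 1 < s) (hsr : s < r) (hc : 1 < c) (hMs : 0 < maxMod f s)
    (hgrowth : r ^ (Real.log (maxMod f s) / Real.log s) ≤ maxMod f r)
    (hMR : 0 < maxMod f (r ^ c)) : maxMod f r ^ c ≤ maxMod f (r ^ c) := by
  have hlogs : 0 < Real.log s := Real.log_pos hs
  have hr1 : 1 < r := hs.trans hsr
  have hr0 : 0 < r := one_pos.trans hr1
  have hrR : r < r ^ c := by simpa using Real.rpow_lt_rpow_of_exponent_lt hr1 hc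
  have hMr : 0 < maxMod f r := (Real.rpow_pos_of_pos hr0 _).trans_le hgrowth
  have hchord := Real.log_le_log hMr
    (maxMod_le_three_circles hf (one_pos.trans hs) hsr.le hrR.le (hsr.trans hrR))
  rw [Real.log_mul (by positivity) (by positivity), Real.log_rpow hMs,
    Real.log_rpow hMR, Real.log_rpow hr0] at hchord
  have hslope : Real.log r * Real.log (maxMod f s) ≤ Real.log s * Real.log (maxMod f r) := by
    have := Real.log_le_log (by positivity) hgrowth
    rw [Real.log_rpow hr0, div_mul_eq_mul_div, div_le_iff₀ hlogs] at this
    linarith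
  rw [← Real.log_le_log_iff (by positivity) hMR, Real.log_rpow hMr]
  exact mul_le_of_le_chord_of_mul_le_mul hlogs (Real.log_lt_log (by linarith) hsr)
    hc.le hchord hslope

/-- For a transcendental entire `f` and `c > 1`, `M(r,f)^c ≤ M(r^c,f)` for all
sufficiently large `r`. -/
theorem maxMod_pow_le_maxMod_rpow (f : ℂ → ℂ) (hf : TranscendentalEntire f)
    (c : ℝ) (hc : 1 < c) :
    ∀ᶠ r : ℝ in atTop, (maxMod f r) ^ c ≤ maxMod f (r ^ c) := by
  obtain ⟨s, hMs, hs⟩ := ((hf.eventually_rpow_le_maxMod 0).and (eventually_gt_atTop 1)).exists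
  rw [Real.rpow_zero] at hMs
  set K := Real.log (maxMod f s) / Real.log s
  have hpow : Tendsto (· ^ c) atTop atTop := tendsto_rpow_atTop (by linarith)
  filter_upwards [hf.eventually_rpow_le_maxMod K, hpow.eventually (hf.eventually_rpow_le_maxMod K),
    eventually_gt_atTop s] with r hr hR hsr
  have hr0 : 0 < r := by linarith
  exact maxMod_pow_le_maxMod_rpow_of_rpow_le_maxMod hf.1 hs hsr hc (one_pos.trans_le hMs) hr
    ((Real.rpow_pos_of_pos (by positivity) K).trans_le hR)
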